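/- There is no informationally complete position observable: for any Borel probability measure ρ on ℝ there exist distinct states T ≠ T′ on L²(ℝ) with p_T^{E_ρ} = p_{T′}^{E_ρ}. Concretely, for any unit vector ψ ∈ L²(ℝ) and any p ≠ 0, setting ψ′ = V(p)ψ where (V(p)f)(x) = e^{ipx}f(x), the rank-one states associated to ψ and ψ′ are distinct but give the same outcome distributions for every position observable E_ρ. -/

import Mathlib

open MeasureTheory Complex

noncomputable section

/-- `L²(ℝ)` with Lebesgue measure. -/
abbrev L2 : Type := Lp ℂ 2 (volume : Measure ℝ)

/-- `T` is the operator of multiplication by the bounded function `x ↦ ρ(X − x)`. -/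
def IsMulByMeas (ρ : Measure ℝ) (X : Set ℝ) (T : L2 →L[ℂ] L2) : Prop :=
  ∀ f : L2, (T f : ℝ → ℂ) =ᵐ[volume]
    fun x => ((ρ ((· + x) ⁻¹' X)).toReal : ℂ) * (f : ℝ → ℂ) x

/- The boost `V(p)` is multiplication by the unimodular function `x ↦ exp (i p x)`. It commutes
with every multiplication operator, so it leaves all position distributions unchanged; and since
this function takes each value only on a countable (hence null) set, `V(p) ψ` is no multiple of
`ψ ≠ 0`. -/

lemma countable_setOf_exp_I_mul_eq {p : ℝ} (hp : p ≠ 0) (c : ℂ) :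
    {x : ℝ | exp (I * p * x) = c}.Countable := by
  rcases Set.eq_empty_or_nonempty {x : ℝ | exp (I * p * x) = c} with h | ⟨x₀, hx₀⟩
  · simp [h]
  refine (Set.countable_range fun n : ℤ => x₀ + n * (2 * Real.pi / p)).mono fun x hx => ?_
  obtain ⟨n, hn⟩ := exp_eq_exp_iff_exists_int.mp (hx.trans hx₀.symm)
  refine ⟨n, ofReal_injective ?_⟩
  have hp' : (p : ℂ) ≠ 0 := ofReal_ne_zero.mpr hp
  push_cast
  field_simp
  apply mul_left_cancel₀ I_ne_zero
  linear_combination -hn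

lemma ae_exp_I_mul_ne {p : ℝ} (hp : p ≠ 0) (μ : Measure ℝ) [NullSingletonClass μ] (c : ℂ) :
    ∀ᵐ x : ℝ ∂μ, exp (I * p * x) ≠ c := by
  simpa using (countable_setOf_exp_I_mul_eq hp c).ae_notMem μ

lemma norm_exp_I_mul (p x : ℝ) : ‖exp (I * p * x)‖ = 1 := by
  simpa [mul_comm, mul_left_comm] using norm_exp_ofReal_mul_I (p * x)

namespace MeasureTheory.Lp

variable {α : Type*} [MeasurableSpace α] {μ : Measure α} {q : ENNReal}

lemma eq_zero_of_eq_smul_of_ae_eq_mul {f g : Lp ℂ q μ} {u : α → ℂ}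
    (hg : g =ᵐ[μ] fun x => u x * f x) (hu : ∀ c, ∀ᵐ x ∂μ, u x ≠ c) {c : ℂ} (hc : g = c • f) :
    f = 0 := by
  refine Lp.ext ?_
  filter_upwards [hg, hc ▸ Lp.coeFn_smul c f, hu c, Lp.coeFn_zero ℂ q μ] with x hgx hcx hux h0
  rw [h0]
  by_contra hfx
  exact hux (mul_right_cancel₀ hfx (hgx.symm.trans hcx))

end MeasureTheory.Lp

namespace MeasureTheory.L2

variable {α : Type*} [MeasurableSpace α] {μ : Measure α}

lemma inner_eq_of_ae_eq_unimodular_mul {f g Tf Tg : Lp ℂ 2 μ} {m u : α → ℂ}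
    (hTf : Tf =ᵐ[μ] fun x => m x * f x) (hTg : Tg =ᵐ[μ] fun x => m x * g x)
    (hg : g =ᵐ[μ] fun x => u x * f x) (hu : ∀ x, ‖u x‖ = 1) :
    inner ℂ f Tf = inner ℂ g Tg := by
  rw [inner_def, inner_def]
  refine integral_congr_ae ?_
  filter_upwards [hTf, hTg, hg] with x hTfx hTgx hgx
  have hconj : (starRingEnd ℂ) (u x) * u x = 1 := by simp [conj_mul', hu x]
  simp only [hTfx, hTgx, hgx, RCLike.inner_apply, map_mul]
  linear_combination (-((starRingEnd ℂ) (f x) * m x * f x)) * hconj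

end MeasureTheory.L2

theorem stmt10 (ρ : Measure ℝ)
    (E : Set ℝ → (L2 →L[ℂ] L2))
    (hE : ∀ X : Set ℝ, MeasurableSet X → IsMulByMeas ρ X (E X))
    (ψ ψ' : L2) (hψ : ‖ψ‖ = 1) (p : ℝ) (hp : p ≠ 0)
    (hψ' : (ψ' : ℝ → ℂ) =ᵐ[volume] fun x => Complex.exp (Complex.I * p * x) * (ψ : ℝ → ℂ) x) :
    (¬ ∃ c : ℂ, ψ' = c • ψ) ∧
    ∀ X : Set ℝ, MeasurableSet X → (inner ℂ ψ (E X ψ) : ℂ) = inner ℂ ψ' (E X ψ') := by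
  refine ⟨fun ⟨c, hc⟩ => ?_, fun X hX => ?_⟩
  · have hψ0 : ψ = 0 := Lp.eq_zero_of_eq_smul_of_ae_eq_mul hψ' (ae_exp_I_mul_ne hp volume) hc
    simp [hψ0] at hψ
  · exact L2.inner_eq_of_ae_eq_unimodular_mul (hE X hX ψ) (hE X hX ψ') hψ' (norm_exp_I_mul p)
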